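/- Let m_2c(z) be the Stieltjes transform of a probability measure ρ on [0, ∞) whose support is contained in [0, λ_r] and which satisfies ρ(x) ∼ sqrt(λ_r − x) near λ_r (i.e. c·sqrt(λ_r−x) ≤ ρ(x) ≤ C·sqrt(λ_r−x) for x ∈ [λ_r − 2c̃, λ_r]). Then for z = E + iη with E ≥ λ_r, κ := E − λ_r, and κ + η ≤ c̃, one has Im m_2c(z) ≤ C' η/√(κ + η) for a constant C' depending only on c, C, c̃, λ_r. -/

import Mathlib

open MeasureTheory

/-!
Write `s = κ + η`. For `x ≤ λ_r ≤ E` the Poisson kernel satisfies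
`η / ((x - E)² + η²) ≤ 2η / (λ_r - x + s)²`. Near the edge the density is at most
`C √(λ_r - x)`, so that part of the integral is at most `2Cη ∫₀^∞ (u + s)^(-3/2) du = 4Cη / √s`.
Away from the edge `|x - E| ≥ 2c̃`, which bounds the kernel by `η / (4c̃²) ≤ c̃^(-3/2) η / (4√s)`
since `s ≤ c̃`.
-/

lemma div_sq_add_sq_le_two_mul_div_sq {a η : ℝ} (ha : 0 ≤ a) (hη : 0 ≤ η) :
    η / (a ^ 2 + η ^ 2) ≤ 2 * η / (a + η) ^ 2 := by
  rcases hη.eq_or_lt with rfl | hη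
  · simp
  rw [div_le_div_iff₀ (by positivity) (by positivity)]
  nlinarith [sq_nonneg (a - η)]

lemma sqrt_mul_div_sq_add_sq_le {u κ η : ℝ} (hu : 0 ≤ u) (hκ : 0 ≤ κ) (hη : 0 < η) :
    √u * (η / ((u + κ) ^ 2 + η ^ 2)) ≤ 2 * η * (u + κ + η) ^ (-(3 / 2 : ℝ)) := by
  have ht : 0 < u + κ + η := by positivity
  have hrpow : (u + κ + η) ^ (-(3 / 2 : ℝ)) = √(u + κ + η) / (u + κ + η) ^ 2 := by
    rw [Real.sqrt_eq_rpow, ← Real.rpow_natCast _ 2, ← Real.rpow_sub ht]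
    norm_num
  calc √u * (η / ((u + κ) ^ 2 + η ^ 2))
      ≤ √(u + κ + η) * (2 * η / (u + κ + η) ^ 2) :=
        mul_le_mul (Real.sqrt_le_sqrt (by linarith))
          (div_sq_add_sq_le_two_mul_div_sq (by positivity) hη.le) (by positivity) (by positivity)
    _ = 2 * η * (u + κ + η) ^ (-(3 / 2 : ℝ)) := by rw [hrpow]; ring

lemma integral_add_rpow_neg_three_halves_le {s L : ℝ} (hs : 0 < s) (hL : 0 ≤ L) :
    ∫ t in (0 : ℝ)..L, (t + s) ^ (-(3 / 2 : ℝ)) ≤ 2 / √s := by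
  have hs0 : (0 : ℝ) ∉ Set.uIcc s (L + s) := by
    rw [Set.uIcc_of_le (by linarith)]
    exact fun h => h.1.not_gt hs
  rw [intervalIntegral.integral_comp_add_right (fun t => t ^ (-(3 / 2 : ℝ))), zero_add,
    integral_rpow (Or.inr ⟨by norm_num, hs0⟩), show -(3 / 2 : ℝ) + 1 = -(1 / 2) by norm_num]
  have hsqrt : s ^ (-(1 / 2 : ℝ)) = 1 / √s := by
    rw [Real.sqrt_eq_rpow, one_div, Real.rpow_neg hs.le, one_div]
  have hLs : 0 ≤ (L + s) ^ (-(1 / 2 : ℝ)) := Real.rpow_nonneg (by linarith) _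
  rw [hsqrt]
  calc ((L + s) ^ (-(1 / 2 : ℝ)) - 1 / √s) / -(1 / 2)
      = 2 / √s - 2 * (L + s) ^ (-(1 / 2 : ℝ)) := by ring
    _ ≤ 2 / √s := by linarith

lemma integral_sqrt_mul_div_sq_add_sq_le {b E η L : ℝ} (hE : b ≤ E) (hη : 0 < η) (hL : 0 ≤ L) :
    ∫ x in Set.Icc (b - L) b, √(b - x) * (η / ((x - E) ^ 2 + η ^ 2))
      ≤ 4 * η / √(E - b + η) := by
  set s := E - b + η with hs_def
  have hs : 0 < s := by positivity
  have hbound : ∀ x ∈ Set.Icc (b - L) b,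
      √(b - x) * (η / ((x - E) ^ 2 + η ^ 2)) ≤ 2 * η * (b - x + s) ^ (-(3 / 2 : ℝ)) := by
    intro x hx
    have := sqrt_mul_div_sq_add_sq_le (sub_nonneg.2 hx.2) (sub_nonneg.2 hE) hη
    rwa [show (x - E) ^ 2 = (b - x + (E - b)) ^ 2 by ring,
      show b - x + s = b - x + (E - b) + η by rw [hs_def]; ring]
  have hcont : ContinuousOn (fun x => 2 * η * (b - x + s) ^ (-(3 / 2 : ℝ))) (Set.Icc (b - L) b) :=
    continuousOn_const.mul <| ContinuousOn.rpow_const (by fun_prop)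
      fun x hx => Or.inl (by linarith [hx.2])
  calc ∫ x in Set.Icc (b - L) b, √(b - x) * (η / ((x - E) ^ 2 + η ^ 2))
      ≤ ∫ x in Set.Icc (b - L) b, 2 * η * (b - x + s) ^ (-(3 / 2 : ℝ)) :=
        setIntegral_mono_on
          (Continuous.integrableOn_Icc (by fun_prop (disch := intro x; positivity)))
          hcont.integrableOn_Icc measurableSet_Icc hbound
    _ = 2 * η * ∫ t in (0 : ℝ)..L, (t + s) ^ (-(3 / 2 : ℝ)) := by
        rw [integral_Icc_eq_integral_Ioc, ← intervalIntegral.integral_of_le (by linarith),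
          intervalIntegral.integral_const_mul,
          intervalIntegral.integral_comp_sub_left (fun t => (t + s) ^ (-(3 / 2 : ℝ)))]
        simp
    _ ≤ 2 * η * (2 / √s) := by gcongr; exact integral_add_rpow_neg_three_halves_le hs hL
    _ = 4 * η / √s := by ring

lemma integral_withDensity_ofReal_le {α : Type*} [MeasurableSpace α] {μ : Measure α}
    {f g h : α → ℝ} (hf : ∀ x, 0 ≤ f x) (hgh : ∀ᵐ x ∂μ, g x ≤ h x) (hh : ∀ x, 0 ≤ h x)
    (hh_meas : Measurable h) (hint : Integrable (fun x => h x * f x) μ) :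
    ∫ x, f x ∂μ.withDensity (fun x => ENNReal.ofReal (g x)) ≤ ∫ x, h x * f x ∂μ := by
  have hd_meas : Measurable fun x => ENNReal.ofReal (h x) := ENNReal.measurable_ofReal.comp hh_meas
  have hd_fin : ∀ᵐ x ∂μ, ENNReal.ofReal (h x) < ⊤ := ae_of_all _ fun _ => ENNReal.ofReal_lt_top
  have hsmul : (fun x => (ENNReal.ofReal (h x)).toReal • f x) = fun x => h x * f x := by
    ext x; rw [ENNReal.toReal_ofReal (hh x), smul_eq_mul]
  have hle : μ.withDensity (fun x => ENNReal.ofReal (g x))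
      ≤ μ.withDensity (fun x => ENNReal.ofReal (h x)) :=
    withDensity_mono (hgh.mono fun _ hx => ENNReal.ofReal_le_ofReal hx)
  have hint' : Integrable f (μ.withDensity fun x => ENNReal.ofReal (h x)) :=
    (integrable_withDensity_iff_integrable_smul' hd_meas hd_fin).2 (by rwa [hsmul])
  calc ∫ x, f x ∂μ.withDensity (fun x => ENNReal.ofReal (g x))
      ≤ ∫ x, f x ∂μ.withDensity (fun x => ENNReal.ofReal (h x)) :=
        integral_mono_measure hle (ae_of_all _ hf) hint'
    _ = ∫ x, h x * f x ∂μ := by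
        rw [integral_withDensity_eq_integral_toReal_smul hd_meas hd_fin, hsmul]

lemma setIntegral_compl_Icc_div_sq_add_sq_le {ρ : Measure ℝ} [IsProbabilityMeasure ρ]
    {b E η L : ℝ} (hsupp : ∀ᵐ x ∂ρ, x ≤ b) (hE : b ≤ E) (hη : 0 ≤ η) (hL : 0 < L) :
    ∫ x in (Set.Icc (b - L) b)ᶜ, η / ((x - E) ^ 2 + η ^ 2) ∂ρ ≤ η / L ^ 2 := by
  have hbound : ∀ᵐ x ∂ρ, x ∈ (Set.Icc (b - L) b)ᶜ → ‖η / ((x - E) ^ 2 + η ^ 2)‖ ≤ η / L ^ 2 := by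
    filter_upwards [hsupp] with x hxb hx
    have hxL : x < b - L := by
      by_contra! h
      exact hx ⟨h, hxb⟩
    rw [Real.norm_of_nonneg (by positivity)]
    exact div_le_div_of_nonneg_left hη (by positivity) (by nlinarith)
  calc ∫ x in (Set.Icc (b - L) b)ᶜ, η / ((x - E) ^ 2 + η ^ 2) ∂ρ
      ≤ ‖∫ x in (Set.Icc (b - L) b)ᶜ, η / ((x - E) ^ 2 + η ^ 2) ∂ρ‖ := Real.le_norm_self _
    _ ≤ η / L ^ 2 * ρ.real (Set.Icc (b - L) b)ᶜ :=
        norm_setIntegral_le_of_norm_le_const_ae' (measure_lt_top _ _) hbound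
    _ ≤ η / L ^ 2 := mul_le_of_le_one_right (by positivity) measureReal_le_one

lemma setIntegral_Icc_div_sq_add_sq_le_of_density_le {ρ : Measure ℝ} {g : ℝ → ℝ}
    {b E η L C : ℝ}
    (hρ : ρ.restrict (Set.Icc (b - L) b)
      = (volume.restrict (Set.Icc (b - L) b)).withDensity fun x => ENNReal.ofReal (g x))
    (hg : ∀ x ∈ Set.Icc (b - L) b, g x ≤ C * √(b - x)) (hC : 0 ≤ C) (hE : b ≤ E) (hη : 0 < η)
    (hL : 0 ≤ L) :
    ∫ x in Set.Icc (b - L) b, η / ((x - E) ^ 2 + η ^ 2) ∂ρ ≤ 4 * C * η / √(E - b + η) := by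
  have hdens : ∀ᵐ x ∂volume.restrict (Set.Icc (b - L) b), g x ≤ C * √(b - x) :=
    (ae_restrict_iff' measurableSet_Icc).2 (ae_of_all _ hg)
  calc ∫ x in Set.Icc (b - L) b, η / ((x - E) ^ 2 + η ^ 2) ∂ρ
      ≤ ∫ x in Set.Icc (b - L) b, C * √(b - x) * (η / ((x - E) ^ 2 + η ^ 2)) := by
        rw [hρ]
        exact integral_withDensity_ofReal_le (fun x => by positivity) hdens
          (fun x => by positivity) (by fun_prop)
          (Continuous.integrableOn_Icc (by fun_prop (disch := intro x; positivity)))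
    _ = C * ∫ x in Set.Icc (b - L) b, √(b - x) * (η / ((x - E) ^ 2 + η ^ 2)) := by
        simp_rw [mul_assoc, integral_const_mul]
    _ ≤ C * (4 * η / √(E - b + η)) := by
        gcongr
        exact integral_sqrt_mul_div_sq_add_sq_le hE hη hL
    _ = 4 * C * η / √(E - b + η) := by ring

lemma integrable_div_sq_add_sq {μ : Measure ℝ} [IsFiniteMeasure μ] (E : ℝ) {η : ℝ} (hη : 0 < η) :
    Integrable (fun x => η / ((x - E) ^ 2 + η ^ 2)) μ := by
  refine Integrable.of_bound (Continuous.aestronglyMeasurable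
    (by fun_prop (disch := intro x; positivity))) (1 / η)
    (ae_of_all _ fun x => ?_)
  rw [Real.norm_of_nonneg (by positivity), div_le_div_iff₀ (by positivity) hη]
  nlinarith [sq_nonneg (x - E)]

theorem stmt16_general (c C ctil lr : ℝ) (hC : 0 < C) :
    ∃ C' > (0 : ℝ), ∀ (ρ : Measure ℝ), IsProbabilityMeasure ρ →
      (∀ᵐ x ∂ρ, x ∈ Set.Icc 0 lr) →
      ∀ g : ℝ → ℝ,
        ρ.restrict (Set.Icc (lr - 2 * ctil) lr)
          = ((volume.restrict (Set.Icc (lr - 2 * ctil) lr)).withDensity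
              fun x => ENNReal.ofReal (g x)) →
        (∀ x ∈ Set.Icc (lr - 2 * ctil) lr,
          c * Real.sqrt (lr - x) ≤ g x ∧ g x ≤ C * Real.sqrt (lr - x)) →
        ∀ E η : ℝ, lr ≤ E → 0 < η → (E - lr) + η ≤ ctil →
          (∫ x, η / ((x - E) ^ 2 + η ^ 2) ∂ρ) ≤ C' * η / Real.sqrt ((E - lr) + η) := by
  refine ⟨4 * C + √ctil / (4 * ctil ^ 2), by positivity, ?_⟩
  intro ρ hρ hsupp g hρg hg E η hE hη hs
  have hctil : 0 < ctil := by linarith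
  have hnear := setIntegral_Icc_div_sq_add_sq_le_of_density_le hρg (fun x hx => (hg x hx).2)
    hC.le hE hη (by positivity)
  have hfar : ∫ x in (Set.Icc (lr - 2 * ctil) lr)ᶜ, η / ((x - E) ^ 2 + η ^ 2) ∂ρ
      ≤ √ctil / (4 * ctil ^ 2) * η / √(E - lr + η) :=
    calc _ ≤ η / (2 * ctil) ^ 2 :=
          setIntegral_compl_Icc_div_sq_add_sq_le (hsupp.mono fun x hx => hx.2) hE hη.le
            (by positivity)
      _ = √ctil / (4 * ctil ^ 2) * η / √ctil := by field_simp; norm_num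
      _ ≤ √ctil / (4 * ctil ^ 2) * η / √(E - lr + η) := by gcongr
  calc ∫ x, η / ((x - E) ^ 2 + η ^ 2) ∂ρ
      = ∫ x in Set.Icc (lr - 2 * ctil) lr, η / ((x - E) ^ 2 + η ^ 2) ∂ρ
        + ∫ x in (Set.Icc (lr - 2 * ctil) lr)ᶜ, η / ((x - E) ^ 2 + η ^ 2) ∂ρ :=
        (integral_add_compl measurableSet_Icc (integrable_div_sq_add_sq E hη)).symm
    _ ≤ _ := add_le_add hnear hfar
    _ = _ := by ring

/-- If `ρ` is a probability measure supported in `[0, lr]` whose density near the right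
edge `lr` is comparable to `√(lr - x)`, then for `z = E + iη` with `E ≥ lr`,
`κ = E - lr` and `κ + η ≤ c̃`, one has `Im m(z) = ∫ η/((x-E)² + η²) dρ ≤ C' η/√(κ + η)`,
with `C'` depending only on `c, C, c̃, lr`. -/
theorem stmt16 (c C ctil lr : ℝ) (hc : 0 < c) (hC : 0 < C) (hctil : 0 < ctil)
    (hlr : 0 < lr) :
    ∃ C' > (0 : ℝ), ∀ (ρ : Measure ℝ), IsProbabilityMeasure ρ →
      (∀ᵐ x ∂ρ, x ∈ Set.Icc 0 lr) →
      ∀ g : ℝ → ℝ,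
        ρ.restrict (Set.Icc (lr - 2 * ctil) lr)
          = ((volume.restrict (Set.Icc (lr - 2 * ctil) lr)).withDensity
              fun x => ENNReal.ofReal (g x)) →
        (∀ x ∈ Set.Icc (lr - 2 * ctil) lr,
          c * Real.sqrt (lr - x) ≤ g x ∧ g x ≤ C * Real.sqrt (lr - x)) →
        ∀ E η : ℝ, lr ≤ E → 0 < η → (E - lr) + η ≤ ctil →
          (∫ x, η / ((x - E) ^ 2 + η ^ 2) ∂ρ) ≤ C' * η / Real.sqrt ((E - lr) + η) :=
  stmt16_general c C ctil lr hC
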